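/- arXiv:math/0407475 — 4 statements merged into one kernel-verified Lean document; each statement's English description precedes it below -/
import Mathlib

section
/- Let K be a field of characteristic p with p ≡ 3 (mod 5), write p = 5u + 3. Then there exist polynomials F, G ∈ K[X,Y] and a nonzero H ∈ K[X,Y], with H a K-linear combination of the u+1 monomials XY·X^{5i}Y^{5(u-i)} for 0 ≤ i ≤ u, such that F·X^{5(2u+1)+1} + G·Y^{5(2u+1)+1} + H·(X^5+Y^5)^{2u+1} = 0 and deg H = 5u + 2. -/
/-!
Put `P = (X^5 + Y^5)^(2u+1)` and `B_i = X^(5i+1) Y^(5(u-i)+1)` for `i ≤ u`. Each product `B_i P`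
is a combination of the monomials `X^(5a+1) Y^(5(3u+1-a)+1)`, `a ≤ 3u+1`, and those with `a ≤ u`
or `a ≥ 2u+1` lie in the ideal `(X^(5(2u+1)+1), Y^(5(2u+1)+1))`. Modulo that ideal the `u+1`
products `B_i P` therefore lie in the span of the `u` remaining monomials, so some nontrivial
combination `H = ∑ c_i B_i` has `H P` in the ideal. Being a nonzero combination of distinct
monomials of degree `5u+2`, `H` is nonzero and homogeneous of that degree.
-/

open MvPolynomial

theorem exists_ne_zero_sum_smul_mem_of_mem_sup_span {K V ι κ : Type*} [Field K]
    [AddCommGroup V] [Module K V] [Fintype ι] [Fintype κ] (S : Submodule K V) (v : ι → V)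
    (w : κ → V) (hcard : Fintype.card κ < Fintype.card ι)
    (hv : ∀ i, v i ∈ S ⊔ Submodule.span K (Set.range w)) :
    ∃ c : ι → K, c ≠ 0 ∧ ∑ i, c i • v i ∈ S := by
  set W := Submodule.span K (Set.range (S.mkQ ∘ w)) with hW
  have hvW : ∀ i, S.mkQ (v i) ∈ W := fun i => by
    obtain ⟨s, hs, t, ht, hst⟩ := Submodule.mem_sup.mp (hv i)
    have hs0 : S.mkQ s = 0 := (Submodule.Quotient.mk_eq_zero S).mpr hs
    rw [← hst, map_add, hs0, zero_add, hW, Set.range_comp, ← Submodule.map_span]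
    exact Submodule.mem_map_of_mem ht
  have : FiniteDimensional K W := FiniteDimensional.span_of_finite K (Set.finite_range _)
  have hdep : ¬LinearIndependent K (fun i => (⟨S.mkQ (v i), hvW i⟩ : W)) := fun hli =>
    (hli.fintype_card_le_finrank.trans (finrank_range_le_card _)).not_gt hcard
  obtain ⟨c, hsum, i, hi⟩ := Fintype.not_linearIndependent_iff.mp hdep
  refine ⟨c, Function.ne_iff.mpr ⟨i, hi⟩, ?_⟩
  rw [← Submodule.Quotient.mk_eq_zero, ← Submodule.mkQ_apply, map_sum]
  simpa [← Subtype.coe_inj] using hsum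

theorem pow_mul_pow_mem_span_pair {R : Type*} [CommSemiring R] (x y : R) {N a b : ℕ}
    (h : N ≤ a ∨ N ≤ b) : x ^ a * y ^ b ∈ Ideal.span {x ^ N, y ^ N} := by
  rcases h with h | h
  · rw [← Nat.add_sub_cancel' h, pow_add, mul_assoc]
    exact Ideal.mul_mem_right _ _ (Ideal.subset_span (by simp))
  · rw [← Nat.add_sub_cancel' h, pow_add, mul_left_comm]
    exact Ideal.mul_mem_right _ _ (Ideal.subset_span (by simp))

theorem linearIndependent_X_zero_pow_mul_X_one_pow {K ι : Type*} [Field K] {f : ι → ℕ}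
    (hf : f.Injective) (g : ι → ℕ) :
    LinearIndependent K (fun i => (X 0 ^ f i * X 1 ^ g i : MvPolynomial (Fin 2) K)) := by
  have hexp : Function.Injective
      fun i => Finsupp.single (0 : Fin 2) (f i) + Finsupp.single 1 (g i) :=
    fun i j hij => hf (by simpa using DFunLike.congr_fun hij 0)
  have hmon : (fun i => (X 0 ^ f i * X 1 ^ g i : MvPolynomial (Fin 2) K)) =
      basisMonomials (Fin 2) K ∘ fun i => Finsupp.single 0 (f i) + Finsupp.single 1 (g i) := by
    ext1 i
    simp [X_pow_eq_monomial, monomial_mul]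
  rw [hmon]
  exact (basisMonomials (Fin 2) K).linearIndependent.comp _ hexp

noncomputable section Syzygy

variable (K : Type*) [Field K] (u : ℕ)

abbrev syzygyMultiplier (i : ℕ) : MvPolynomial (Fin 2) K :=
  X 0 * X 1 * X 0 ^ (5 * i) * X 1 ^ (5 * (u - i))

abbrev syzygyMonomial (a : ℕ) : MvPolynomial (Fin 2) K :=
  X 0 ^ (5 * a + 1) * X 1 ^ (5 * (3 * u + 1 - a) + 1)

abbrev syzygyIdeal : Ideal (MvPolynomial (Fin 2) K) :=
  Ideal.span {X 0 ^ (5 * (2 * u + 1) + 1), X 1 ^ (5 * (2 * u + 1) + 1)}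

abbrev syzygyMiddle : Submodule K (MvPolynomial (Fin 2) K) :=
  Submodule.span K (Set.range fun k : Fin u => syzygyMonomial K u (u + 1 + k))

variable {K u}

theorem syzygyMonomial_mem {a : ℕ} (ha : a ≤ 3 * u + 1) :
    syzygyMonomial K u a ∈ (syzygyIdeal K u).restrictScalars K ⊔ syzygyMiddle K u := by
  by_cases hmid : u + 1 ≤ a ∧ a ≤ 2 * u
  · refine Submodule.mem_sup_right (Submodule.subset_span ⟨⟨a - (u + 1), by omega⟩, ?_⟩)
    simp only
    congr 3
    omega
  · exact Submodule.mem_sup_left (pow_mul_pow_mem_span_pair _ _ (by omega))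

theorem syzygyMultiplier_mul_mem_sup {i : ℕ} (hi : i ≤ u) :
    syzygyMultiplier K u i * (X 0 ^ 5 + X 1 ^ 5) ^ (2 * u + 1) ∈
      (syzygyIdeal K u).restrictScalars K ⊔ syzygyMiddle K u := by
  rw [add_pow, Finset.mul_sum]
  refine Submodule.sum_mem _ fun j hj => ?_
  have hj : j ≤ 2 * u + 1 := Nat.lt_succ_iff.mp (Finset.mem_range.mp hj)
  have hexp : u - i + (2 * u + 1 - j) = 3 * u + 1 - (i + j) := by omega
  have hterm : syzygyMultiplier K u i *
      ((X 0 ^ 5) ^ j * (X 1 ^ 5) ^ (2 * u + 1 - j) *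
        (((2 * u + 1).choose j : ℕ) : MvPolynomial (Fin 2) K)) =
      ((2 * u + 1).choose j) • syzygyMonomial K u (i + j) := by
    rw [syzygyMultiplier, syzygyMonomial, ← hexp, nsmul_eq_mul]
    ring
  rw [hterm]
  exact Submodule.smul_of_tower_mem _ _ (syzygyMonomial_mem (by omega))

theorem linearIndependent_syzygyMultiplier :
    LinearIndependent K fun i : Fin (u + 1) => syzygyMultiplier K u i := by
  convert linearIndependent_X_zero_pow_mul_X_one_pow (K := K)
    (f := fun i : Fin (u + 1) => 5 * i + 1) (fun i j hij => Fin.ext (by simpa using hij))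
    (fun i => 5 * (u - i) + 1) using 2
  ring

theorem span_syzygyMultiplier_le_homogeneousSubmodule :
    Submodule.span K {m | ∃ i ≤ u, m = syzygyMultiplier K u i} ≤
      homogeneousSubmodule (Fin 2) K (5 * u + 2) := by
  refine Submodule.span_le.mpr ?_
  rintro _ ⟨i, hi, rfl⟩
  rw [SetLike.mem_coe, mem_homogeneousSubmodule,
    show 5 * u + 2 = 1 + 1 + 5 * i + 5 * (u - i) by omega]
  exact (((isHomogeneous_X K 0).mul (isHomogeneous_X K 1)).mul (isHomogeneous_X_pow 0 _)).mul
    (isHomogeneous_X_pow 1 _)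

end Syzygy

theorem stmt_4_general (K : Type*) [Field K] (u : ℕ) :
    ∃ F G H : MvPolynomial (Fin 2) K,
      H ≠ 0 ∧
      H ∈ Submodule.span K
        {m : MvPolynomial (Fin 2) K |
          ∃ i ≤ u, m = X 0 * X 1 * X 0 ^ (5 * i) * X 1 ^ (5 * (u - i))} ∧
      F * X 0 ^ (5 * (2 * u + 1) + 1) + G * X 1 ^ (5 * (2 * u + 1) + 1)
          + H * (X 0 ^ 5 + X 1 ^ 5) ^ (2 * u + 1) = 0 ∧
      H.totalDegree = 5 * u + 2 := by
  obtain ⟨c, hc, hmem⟩ := exists_ne_zero_sum_smul_mem_of_mem_sup_span _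
    (fun i : Fin (u + 1) => syzygyMultiplier K u i * (X 0 ^ 5 + X 1 ^ 5) ^ (2 * u + 1))
    (fun k : Fin u => syzygyMonomial K u (u + 1 + k))
    (by simp) (fun i => syzygyMultiplier_mul_mem_sup (Nat.lt_succ_iff.mp i.isLt))
  set H := ∑ i, c i • syzygyMultiplier K u i
  have hH : H ≠ 0 := fun h =>
    hc (funext (Fintype.linearIndependent_iff.mp linearIndependent_syzygyMultiplier c h))
  have hspan : H ∈ Submodule.span K {m | ∃ i ≤ u, m = syzygyMultiplier K u i} :=
    Submodule.sum_mem _ fun i _ =>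
      Submodule.smul_mem _ _ (Submodule.subset_span ⟨i, Nat.lt_succ_iff.mp i.isLt, rfl⟩)
  obtain ⟨F, G, hFG⟩ := Ideal.mem_span_pair.mp
    (show H * (X 0 ^ 5 + X 1 ^ 5) ^ (2 * u + 1) ∈ syzygyIdeal K u by
      simpa [H, Finset.sum_mul, smul_mul_assoc] using hmem)
  refine ⟨-F, -G, H, hH, hspan, by linear_combination -hFG, ?_⟩
  exact IsHomogeneous.totalDegree (span_syzygyMultiplier_le_homogeneousSubmodule hspan) hH

theorem stmt_4 (K : Type*) [Field K] (p u : ℕ) (hp : p.Prime) [CharP K p]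
    (hpu : p = 5 * u + 3) :
    ∃ F G H : MvPolynomial (Fin 2) K,
      H ≠ 0 ∧
      H ∈ Submodule.span K
        {m : MvPolynomial (Fin 2) K |
          ∃ i ≤ u, m = X 0 * X 1 * X 0 ^ (5 * i) * X 1 ^ (5 * (u - i))} ∧
      F * X 0 ^ (5 * (2 * u + 1) + 1) + G * X 1 ^ (5 * (2 * u + 1) + 1)
          + H * (X 0 ^ 5 + X 1 ^ 5) ^ (2 * u + 1) = 0 ∧
      H.totalDegree = 5 * u + 2 :=
  stmt_4_general K u
end

section
/- Let K be a field and let d, k be natural numbers with k even and b = dk + t where 2d/3 < t < d. Then there exist λ_{ij} ∈ K, not all zero, indexed by pairs (i,j) with i + j = k/2, such that Σ_{i+j=k/2} λ_{ij} X^{di} Y^{dj} (X^d + Y^d)^{k+1} lies in the ideal (X^b, Y^b) of K[X,Y]. -/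
/-!
Modulo `I = (X^b, Y^b)` put `x = X^d`, `y = Y^d`; since `b ≤ d(k+1)`, both `x^(k+1)` and `y^(k+1)`
vanish. Expanding the binomial, each `x^i y^(m-i) (x+y)^(k+1)` with `m = k/2` is then an integral
combination of the `m` monomials `x^s y^(m+k+1-s)` with `m < s < k+1`, so these `m + 1` products are
linearly dependent over `K`.
-/

open MvPolynomial Finset

theorem exists_ne_zero_sum_smul_eq_zero_of_mem_span {K V ι : Type*} [Field K] [AddCommGroup V]
    [Module K V] [Fintype ι] (e : ι → V) (S : Finset V)
    (he : ∀ i, e i ∈ Submodule.span K (S : Set V)) (hcard : #S < Fintype.card ι) :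
    ∃ c : ι → K, c ≠ 0 ∧ ∑ i, c i • e i = 0 := by
  have hdep : ¬LinearIndependent K e := fun hli => by
    have hspan : Submodule.span K (Set.range e) ≤ Submodule.span K (S : Set V) :=
      Submodule.span_le.mpr (Set.range_subset_iff.mpr he)
    have := calc Fintype.card ι ≤ (Set.range e).finrank K :=
          linearIndependent_iff_card_le_finrank_span.mp hli
      _ ≤ (S : Set V).finrank K := Submodule.finrank_mono hspan
      _ ≤ #S := finrank_span_finset_le_card S
    omega
  obtain ⟨c, hsum, i, hi⟩ := Fintype.not_linearIndependent_iff.mp hdep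
  exact ⟨c, Function.ne_iff.mpr ⟨i, hi⟩, hsum⟩

theorem pow_mul_pow_mul_add_pow_mem_span {R A : Type*} [Semiring R] [CommSemiring A]
    [DecidableEq A] [Module R A] {x y : A} {n : ℕ} (hx : x ^ n = 0) (hy : y ^ n = 0) (i j : ℕ) :
    x ^ i * y ^ j * (x + y) ^ n ∈
      Submodule.span R ((Ioo (i + j) n).image fun s => x ^ s * y ^ (i + j + n - s) : Set A) := by
  rw [add_pow, Finset.mul_sum]
  refine Submodule.sum_mem _ fun u hu => ?_
  have hu : u ≤ n := Nat.lt_succ_iff.mp (mem_range.mp hu)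
  have hterm : x ^ i * y ^ j * (x ^ u * y ^ (n - u) * (n.choose u : A))
      = n.choose u • (x ^ (i + u) * y ^ (j + (n - u))) := by
    rw [nsmul_eq_mul]; ring
  rw [hterm]
  refine Submodule.smul_of_tower_mem _ _ ?_
  by_cases hxn : n ≤ i + u
  · rw [pow_eq_zero_of_le hxn hx, zero_mul]; exact Submodule.zero_mem _
  by_cases hyn : n ≤ j + (n - u)
  · rw [pow_eq_zero_of_le hyn hy, mul_zero]; exact Submodule.zero_mem _
  refine Submodule.subset_span
    (mem_coe.mpr (mem_image.mpr ⟨i + u, mem_Ioo.mpr ⟨by omega, by omega⟩, ?_⟩))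
  rw [show i + j + n - (i + u) = j + (n - u) by omega]

theorem stmt_5_general (K : Type*) [Field K] (d k t b : ℕ) (hk : Even k)
    (ht : t < d) (hb : b = d * k + t) :
    ∃ lam : Fin (k / 2 + 1) → K, lam ≠ 0 ∧
      (∑ i : Fin (k / 2 + 1),
          C (lam i) * X 0 ^ (d * (i : ℕ)) * X 1 ^ (d * (k / 2 - (i : ℕ)))
            * ((X 0 : MvPolynomial (Fin 2) K) ^ d + X 1 ^ d) ^ (k + 1))
        ∈ Ideal.span {(X 0 : MvPolynomial (Fin 2) K) ^ b, X 1 ^ b} := by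
  set I := Ideal.span {(X 0 : MvPolynomial (Fin 2) K) ^ b, X 1 ^ b}
  set m := k / 2
  have hbd : b ≤ d * (k + 1) := by rw [hb, mul_add_one]; omega
  set x := Ideal.Quotient.mk I (X 0 ^ d)
  set y := Ideal.Quotient.mk I (X 1 ^ d)
  have hnil : ∀ v : MvPolynomial (Fin 2) K, v ^ b ∈ I →
      Ideal.Quotient.mk I (v ^ d) ^ (k + 1) = 0 := fun v hv => by
    rw [← map_pow, Ideal.Quotient.eq_zero_iff_mem, ← pow_mul]
    exact I.pow_mem_of_pow_mem hv hbd
  have hx : x ^ (k + 1) = 0 := hnil _ (Ideal.subset_span (Set.mem_insert _ _))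
  have hy : y ^ (k + 1) = 0 := hnil _ (Ideal.subset_span (Set.mem_insert_of_mem _ rfl))
  classical
  set S := (Ioo m (k + 1)).image fun s => x ^ s * y ^ (m + (k + 1) - s)
  have hmem : ∀ i : Fin (m + 1),
      x ^ (i : ℕ) * y ^ (m - i) * (x + y) ^ (k + 1) ∈ Submodule.span K (S : Set _) := fun i => by
    have := pow_mul_pow_mul_add_pow_mem_span (R := K) hx hy i (m - i)
    rwa [Nat.add_sub_cancel' (Nat.lt_succ_iff.mp i.isLt)] at this
  have hcard : #S < Fintype.card (Fin (m + 1)) := by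
    refine card_image_le.trans_lt ?_
    obtain ⟨r, hr⟩ := hk
    simp only [Nat.card_Ioo, Fintype.card_fin]
    omega
  obtain ⟨lam, hlam, hsum⟩ := exists_ne_zero_sum_smul_eq_zero_of_mem_span _ S hmem hcard
  refine ⟨lam, hlam, Ideal.Quotient.eq_zero_iff_mem.mp ?_⟩
  rw [← hsum, map_sum]
  refine Fintype.sum_congr _ _ fun i => ?_
  rw [mul_assoc, mul_assoc, C_mul', ← Ideal.Quotient.mkₐ_eq_mk K, map_smul,
    Ideal.Quotient.mkₐ_eq_mk]
  simp only [x, y, map_mul, map_pow, map_add, pow_mul, mul_assoc]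

theorem stmt_5 (K : Type*) [Field K] (d k t b : ℕ) (hd : 1 ≤ d) (hk : Even k)
    (ht : t < d) (ht2 : 2 * d < 3 * t) (hb : b = d * k + t) :
    ∃ lam : Fin (k / 2 + 1) → K, lam ≠ 0 ∧
      (∑ i : Fin (k / 2 + 1),
          C (lam i) * X 0 ^ (d * (i : ℕ)) * X 1 ^ (d * (k / 2 - (i : ℕ)))
            * ((X 0 : MvPolynomial (Fin 2) K) ^ d + X 1 ^ d) ^ (k + 1))
        ∈ Ideal.span {(X 0 : MvPolynomial (Fin 2) K) ^ b, X 1 ^ b} :=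
  stmt_5_general K d k t b hk ht hb
end

section
/- Let h > 5 be a prime such that d = 2h + 1 is also prime (h a Sophie Germain prime). Then every unit r of Z/d with r ≢ ±1 (mod d) has some power r^e whose representative s satisfies d/3 < s < d/2 (i.e., 2s < d < 3s). -/
lemma sq_between (n : ℕ) (hodd : n % 2 = 1) (hn : 51 ≤ n) :
    ∃ k : ℕ, 2 * k ^ 2 < n ∧ n < 3 * k ^ 2 := by
  set q := n / 2 with hq
  have hnq : n = 2 * q + 1 := by omega
  refine ⟨Nat.sqrt q, ?_, ?_⟩
  · have h1 : Nat.sqrt q ^ 2 ≤ q := Nat.sqrt_le' q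
    nlinarith
  · have h2 : q < (Nat.sqrt q + 1) ^ 2 := Nat.lt_succ_sqrt' q
    have h3 : 5 ≤ Nat.sqrt q := Nat.le_sqrt'.mpr (by nlinarith)
    nlinarith

theorem stmt_8 (h d : ℕ) (hh : h.Prime) (h5 : 5 < h) (hd : d = 2 * h + 1)
    (hdp : d.Prime) (r : (ZMod d)ˣ)
    (h1 : (r : ZMod d) ≠ 1) (hm1 : (r : ZMod d) ≠ -1) :
    ∃ e : ℕ, 2 * ((r : ZMod d) ^ e).val < d ∧ d < 3 * ((r : ZMod d) ^ e).val := by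
  haveI : Fact d.Prime := ⟨hdp⟩
  classical
  -- find a square strictly between d/3 and d/2
  obtain ⟨k, hk1, hk2⟩ : ∃ k : ℕ, 2 * k ^ 2 < d ∧ d < 3 * k ^ 2 := by
    rcases lt_or_ge d 51 with hs | hs
    · subst hd
      have h25 : h < 25 := by omega
      interval_cases h
      all_goals first
        | (exfalso; revert hdp; decide)
        | (exfalso; revert hh; decide)
        | (refine ⟨3, ?_, ?_⟩ <;> decide)
        | (refine ⟨4, ?_, ?_⟩ <;> decide)
    · exact sq_between d (by omega) hs
  have hk2d : k ^ 2 < d := by nlinarith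
  have hk0 : 0 < k := by nlinarith
  have hkd : k < d := lt_of_le_of_lt (Nat.le_self_pow two_ne_zero k) hk2d
  have hkz : (k : ZMod d) ≠ 0 := by
    rw [Ne, ZMod.natCast_eq_zero_iff]
    intro hdvd
    exact absurd (Nat.le_of_dvd hk0 hdvd) (by omega)
  obtain ⟨u, hu⟩ := isUnit_iff_ne_zero.mpr hkz
  have hcard : Fintype.card (ZMod d)ˣ = 2 * h := by
    rw [ZMod.card_units]; omega
  have hr2 : (r : ZMod d) ^ 2 ≠ 1 := by
    intro hc
    rcases sq_eq_one_iff.mp hc with h' | h'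
    · exact h1 h'
    · exact hm1 h'
  have hrh : orderOf (r ^ 2) = h := by
    have h2 : (r ^ 2) ^ h = 1 := by
      rw [← pow_mul, ← hcard]; exact pow_card_eq_one
    have hdvd := orderOf_dvd_of_pow_eq_one h2
    rcases (Nat.Prime.eq_one_or_self_of_dvd hh _ hdvd) with h' | h'
    · exfalso
      have : r ^ 2 = 1 := orderOf_eq_one_iff.mp h'
      apply hr2
      have := congrArg (Units.val) this
      simpa using this
    · exact h'
  set K := (powMonoidHom h : (ZMod d)ˣ →* (ZMod d)ˣ).ker with hK
  have hle : Subgroup.zpowers (r ^ 2) ≤ K := by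
    rw [Subgroup.zpowers_le]
    rw [MonoidHom.mem_ker, powMonoidHom_apply, ← pow_mul, ← hcard]
    exact pow_card_eq_one
  have hcardK : Nat.card K ≤ h := by
    have hb := IsCyclic.card_pow_eq_one_le (α := (ZMod d)ˣ) (n := h) (by omega)
    calc Nat.card K = Fintype.card K := Nat.card_eq_fintype_card
      _ = Fintype.card {a : (ZMod d)ˣ // a ^ h = 1} := by
          apply Fintype.card_congr
          exact Equiv.subtypeEquivRight fun x => by
            simp [hK, MonoidHom.mem_ker, powMonoidHom_apply]
      _ = _ := Fintype.card_subtype _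
      _ ≤ h := hb
  have hcardz : Nat.card (Subgroup.zpowers (r ^ 2)) = h := by
    rw [Nat.card_zpowers, hrh]
  have hKeq : Subgroup.zpowers (r ^ 2) = K :=
    Subgroup.eq_of_le_of_card_ge hle (by rw [hcardz]; exact hcardK)
  have humem : u ^ 2 ∈ K := by
    rw [MonoidHom.mem_ker, powMonoidHom_apply, ← pow_mul, ← hcard]
    exact pow_card_eq_one
  rw [← hKeq] at humem
  obtain ⟨m, hm⟩ := mem_powers_iff_mem_zpowers.mpr humem
  refine ⟨2 * m, ?_, ?_⟩ <;>
  · have hval : ((r : ZMod d) ^ (2 * m)).val = k ^ 2 := by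
      have hcast := congrArg (Units.val) hm
      simp only [Units.val_pow_eq_pow_val] at hcast
      rw [hu] at hcast
      rw [pow_mul, hcast, ← Nat.cast_pow, ZMod.val_cast_of_lt hk2d]
    rw [hval]
    omega
end

section
/- Let d = 2h+1 with h, d prime and h > 5. The number of units r in (Z/d)^× such that some power of r has representative s with 2s < d < 3s is at least 2h − 2, i.e., all units except ±1. -/
open Subgroup

theorem stmt_15 (h d : ℕ) (hh : h.Prime) (h5 : 5 < h) (hd : d = 2 * h + 1)
    (hdp : d.Prime) :
    2 * h - 2 ≤ Set.ncard {r : (ZMod d)ˣ | ∃ e : ℕ,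
      2 * ((r : ZMod d) ^ e).val < d ∧ d < 3 * ((r : ZMod d) ^ e).val} := by
  haveI : Fact d.Prime := ⟨hdp⟩
  haveI : NeZero d := ⟨hdp.pos.ne'⟩
  classical
  -- Step 1: find k with d/3 < k^2 < d/2
  obtain ⟨k, hk1, hk2⟩ : ∃ k : ℕ, 2 * k^2 < d ∧ d < 3 * k^2 := by
    rcases le_or_gt 50 d with hge | hlt
    · have hodd : d % 2 = 1 := by
        rcases hdp.eq_two_or_odd with hc | hc <;> omega
      refine ⟨Nat.sqrt (d/2), ?_, ?_⟩
      · have : Nat.sqrt (d/2) ^2 ≤ d/2 := by nlinarith [Nat.sqrt_le (d/2)]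
        omega
      · have h2 := Nat.lt_succ_sqrt (d/2)
        have h3 : 5 ≤ Nat.sqrt (d/2) := by
          have : Nat.sqrt 25 ≤ Nat.sqrt (d/2) := Nat.sqrt_le_sqrt (by omega)
          norm_num [Nat.sqrt] at this ⊢; omega
        set q := Nat.sqrt (d/2)
        have : d/2 ≤ q^2 + 2*q := by nlinarith
        nlinarith [Nat.div_add_mod d 2]
    · subst hd
      have hcase : 2*h+1 = 23 ∨ 2*h+1 = 47 := by
        have hub : h < 25 := by omega
        interval_cases h <;> revert hh hdp <;> norm_num
      rcases hcase with he | he <;> rw [he] <;>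
        [exact ⟨3, by norm_num⟩; exact ⟨4, by norm_num⟩]
  -- Step 2: build the unit u = k^2 with u^h = 1 and val = k^2
  have hk0 : 0 < k := by nlinarith
  have hkd : k ^ 2 < d := by omega
  have hcop : Nat.Coprime (k ^ 2) d :=
    Nat.coprime_comm.mp <| hdp.coprime_iff_not_dvd.mpr
      (fun hdvd => by have := Nat.le_of_dvd (by positivity) hdvd; omega)
  set u : (ZMod d)ˣ := ZMod.unitOfCoprime _ hcop with hu
  have hucast : (u : ZMod d) = ((k^2 : ℕ) : ZMod d) := rfl
  have huval : ((u : ZMod d)).val = k ^ 2 := by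
    rw [hucast, ZMod.val_cast_of_lt hkd]
  have hupow : u ^ h = 1 := by
    ext
    rw [Units.val_pow_eq_pow_val, hucast, Units.val_one]
    push_cast
    have hkz : ((k : ZMod d)) ≠ 0 := by
      rw [Ne, ZMod.natCast_eq_zero_iff]
      intro hdvd; have := Nat.le_of_dvd hk0 hdvd; nlinarith
    calc ((k:ZMod d)^2)^h = (k:ZMod d)^(d-1) := by rw [← pow_mul]; congr 1; omega
    _ = 1 := ZMod.pow_card_sub_one_eq_one hkz
  -- Step 3: every unit r ∉ {1, -1} has u as a power
  have hcard : Fintype.card (ZMod d)ˣ = 2 * h := by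
    rw [ZMod.card_units_eq_totient, Nat.totient_prime hdp]; omega
  have key : ∀ r : (ZMod d)ˣ, r ≠ 1 → r ≠ -1 → ∃ e : ℕ, r ^ e = u := by
    intro r hr1 hrm1
    have hodvd : orderOf r ∣ 2 * h := hcard ▸ orderOf_dvd_card
    have hord : orderOf r = h ∨ orderOf r = 2 * h := by
      have h1 : orderOf r ≠ 1 := by simpa [orderOf_eq_one_iff] using hr1
      have h2 : orderOf r ≠ 2 := by
        intro h2
        have : r ^ 2 = 1 := h2 ▸ pow_orderOf_eq_one r
        have : (r : ZMod d) ^ 2 = 1 := by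
          rw [← Units.val_pow_eq_pow_val, this, Units.val_one]
        rcases sq_eq_one_iff.mp this with hc | hc
        · exact hr1 (Units.ext (by simpa using hc))
        · exact hrm1 (Units.ext (by simpa using hc))
      by_cases hcase : h ∣ orderOf r
      · obtain ⟨m, hm⟩ := hcase
        have hdvd2 : h * m ∣ h * 2 := by rwa [hm, mul_comm 2 h] at hodvd
        have hm2 : m ∣ 2 := (Nat.mul_dvd_mul_iff_left hh.pos).mp hdvd2
        rcases (Nat.dvd_prime Nat.prime_two).mp hm2 with rfl | rfl <;> omega
      · have hcop' : Nat.Coprime (orderOf r) h :=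
          (hh.coprime_iff_not_dvd.mpr hcase).symm
        have : orderOf r ∣ 2 := hcop'.dvd_of_dvd_mul_right hodvd
        rcases (Nat.dvd_prime Nat.prime_two).mp this with hc | hc <;> omega
    have hmem : u ∈ zpowers r := by
      rcases hord with ho | ho
      · have hsub : (zpowers r : Set (ZMod d)ˣ).toFinset ⊆
            Finset.univ.filter (fun a => a ^ h = 1) := by
          intro x hx
          simp only [Set.mem_toFinset, SetLike.mem_coe] at hx
          simp only [Finset.mem_filter, Finset.mem_univ, true_and]
          have : orderOf x ∣ orderOf r := orderOf_dvd_of_mem_zpowers hx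
          exact orderOf_dvd_iff_pow_eq_one.mp (ho ▸ this)
        by_contra hnot
        have hcardle := IsCyclic.card_pow_eq_one_le (α := (ZMod d)ˣ) (n := h) hh.pos
        have hZcard : (zpowers r : Set (ZMod d)ˣ).toFinset.card = h := by
          rw [Set.toFinset_card]
          exact ho ▸ Fintype.card_zpowers
        have hins : insert u ((zpowers r : Set (ZMod d)ˣ).toFinset) ⊆
            Finset.univ.filter (fun a => a ^ h = 1) := by
          intro x hx
          rcases Finset.mem_insert.mp hx with rfl | hx
          · simp [hupow]
          · exact hsub hx
        have := Finset.card_le_card hins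
        rw [Finset.card_insert_of_notMem (by simpa [Set.mem_toFinset] using hnot),
          hZcard] at this
        omega
      · have : zpowers r = ⊤ := by
          apply Subgroup.eq_top_of_card_eq
          rw [Nat.card_zpowers, ho, Nat.card_eq_fintype_card, hcard]
        rw [this]; trivial
    obtain ⟨e, he⟩ := mem_powers_iff_mem_zpowers.mpr hmem
    exact ⟨e, he⟩
  -- Step 4: counting
  set S := {r : (ZMod d)ˣ | ∃ e : ℕ,
      2 * ((r : ZMod d) ^ e).val < d ∧ d < 3 * ((r : ZMod d) ^ e).val} with hS
  have hsub : (({1, -1} : Set (ZMod d)ˣ))ᶜ ⊆ S := by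
    intro r hr
    simp only [Set.mem_compl_iff, Set.mem_insert_iff, Set.mem_singleton_iff, not_or] at hr
    obtain ⟨e, he⟩ := key r hr.1 hr.2
    refine ⟨e, ?_, ?_⟩ <;>
      rw [← Units.val_pow_eq_pow_val, he, huval] <;> omega
  have hfin : S.Finite := Set.toFinite _
  have h1 : (({1, -1} : Set (ZMod d)ˣ))ᶜ.ncard ≤ S.ncard :=
    Set.ncard_le_ncard hsub hfin
  have h2 : (({1, -1} : Set (ZMod d)ˣ)).ncard ≤ 2 := by
    apply le_trans (Set.ncard_insert_le _ _)
    simp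
  have h3 := Set.ncard_add_ncard_compl ({1, -1} : Set (ZMod d)ˣ)
  have h4 : Nat.card (ZMod d)ˣ = 2 * h := by rw [Nat.card_eq_fintype_card, hcard]
  omega
end
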